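/- arXiv:1907.11801 — 3 statements merged into one kernel-verified Lean document; each statement's English description precedes it below -/
import Mathlib

section
/- Let (W,S) be a Coxeter system and suppose v ⋖_L w, i.e., w = sv for some s ∈ S with ℓ(w) = ℓ(v) + 1. Then |D_R(w)| equals |D_R(v)| or |D_R(v)| + 1. -/
open CoxeterSystem

variable {B W : Type*} [Group W] {M : CoxeterMatrix B}

/-- A directed edge of the Bruhat graph: `v = t * u` for a reflection `t`, with length increase. -/
def bruhatEdge (cs : CoxeterSystem M W) (u v : W) : Prop :=
  ∃ t : W, cs.IsReflection t ∧ v = t * u ∧ cs.length u < cs.length v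

/-- Bruhat order: reflexive-transitive closure of Bruhat edges. -/
def bruhatLE (cs : CoxeterSystem M W) : W → W → Prop :=
  Relation.ReflTransGen (bruhatEdge cs)

/-- The standard parabolic subgroup generated by the simple reflections indexed by `I`. -/
def parabolic (cs : CoxeterSystem M W) (I : Set B) : Subgroup W :=
  Subgroup.closure (cs.simple '' I)

/-- The parabolic double coset `W_I x W_J`. -/
def doubleCoset (cs : CoxeterSystem M W) (I J : Set B) (x : W) : Set W :=
  {w | ∃ u ∈ parabolic cs I, ∃ v ∈ parabolic cs J, w = u * x * v}

/-!
If `ℓ(s v) = ℓ(v) + 1`, every right descent of `v` remains one of `s v`, and a new right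
descent `j` of `s v` forces `s v = v s_j`: `s` is a left descent of `v s_j`, so it occurs in the
left inversion sequence of `ω j` for a reduced word `ω` of `v`; it cannot occur in that of `ω`,
as `s` is not a left descent of `v`, and the remaining entry is `v s_j v⁻¹`. That a descent occurs
in the inversion sequence of every reduced word comes from the action of `W` on `W × ZMod 2` in
which a simple reflection conjugates and flips the sign exactly at itself: the parity of the number
of occurrences of `t` in the inversion sequence depends only on the element. Finally the simple
reflections are pairwise distinct (they act differently in the geometric representation), so
`s v = v s_j` has at most one solution `j`.
-/

open Finset

theorem Module.End.geom_sum_apply_of_apply_eq_smul {R V : Type*} [CommSemiring R] [AddCommMonoid V]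
    [Module R V] {f : Module.End R V} {v : V} {c : R} (h : f v = c • v) (n : ℕ) :
    (∑ k ∈ range n, f ^ k) v = (∑ k ∈ range n, c ^ k) • v := by
  have hpow (k : ℕ) : (f ^ k) v = c ^ k • v := by
    induction k with
    | zero => simp
    | succ k ih => rw [pow_succ', Module.End.mul_apply, ih, map_smul, h, smul_smul, pow_succ]
  simp only [LinearMap.sum_apply, hpow, Finset.sum_smul]

theorem Complex.isPrimitiveRoot_exp_pi_mul_I_div (m : ℕ) (hm : m ≠ 0) :
    IsPrimitiveRoot (Complex.exp (Real.pi * Complex.I / m)) (2 * m) := by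
  convert Complex.isPrimitiveRoot_exp (2 * m) (by omega) using 2
  push_cast
  field_simp

namespace CoxeterMatrix

variable (M)

/-- `-cos (π / M a b)`, written as `-(ζ + ζ⁻¹) / 2` with `ζ = exp (π i / M a b)`. When
`M a b = 0`, Lean's `x / 0 = 0` gives `ζ = 1` and hence the entry `-1` of an infinite bond. -/
noncomputable def bilinCoeff (a b : B) : ℂ :=
  -(Complex.exp (Real.pi * Complex.I / M a b) +
    (Complex.exp (Real.pi * Complex.I / M a b))⁻¹) / 2

noncomputable def pairing (a : B) : (B →₀ ℂ) →ₗ[ℂ] ℂ :=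
  Finsupp.linearCombination ℂ (M.bilinCoeff a)

noncomputable def geomReflection (a : B) : Module.End ℂ (B →₀ ℂ) :=
  LinearMap.id - ((2 : ℂ) • M.pairing a).smulRight (Finsupp.single a 1)

theorem bilinCoeff_comm (a b : B) : M.bilinCoeff a b = M.bilinCoeff b a := by
  rw [bilinCoeff, bilinCoeff, M.symmetric]

theorem bilinCoeff_self (a : B) : M.bilinCoeff a a = 1 := by
  have : Real.pi * Complex.I / (1 : ℕ) = Real.pi * Complex.I := by simp
  rw [bilinCoeff, M.diagonal, this, Complex.exp_pi_mul_I]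
  norm_num

theorem geomReflection_apply (a : B) (v : B →₀ ℂ) :
    M.geomReflection a v = v - (2 * M.pairing a v) • Finsupp.single a 1 := by
  simp [geomReflection]

theorem geomReflection_single (a b : B) :
    M.geomReflection a (Finsupp.single b 1) =
      Finsupp.single b 1 - (2 * M.bilinCoeff a b) • Finsupp.single a 1 := by
  simp [geomReflection_apply, pairing]

theorem geomReflection_single_self (a : B) :
    M.geomReflection a (Finsupp.single a 1) = -Finsupp.single a 1 := by
  rw [geomReflection_single, bilinCoeff_self]
  module

theorem geomReflection_mul_self (a : B) : M.geomReflection a * M.geomReflection a = 1 := by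
  refine LinearMap.ext fun v => ?_
  rw [Module.End.mul_apply, Module.End.one_apply, geomReflection_apply M a v, map_sub, map_smul,
    geomReflection_single_self, geomReflection_apply M a v]
  module

theorem geom_sum_geomReflection_mul_single_eq_zero {a b : B} (hab : 2 ≤ M a b) :
    (∑ k ∈ range (M a b), (M.geomReflection a * M.geomReflection b) ^ k)
        (Finsupp.single a 1) = 0 ∧
      (∑ k ∈ range (M a b), (M.geomReflection a * M.geomReflection b) ^ k)
        (Finsupp.single b 1) = 0 := by
  set m := M a b
  set ζ := Complex.exp (Real.pi * Complex.I / m)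
  have hμ : IsPrimitiveRoot (ζ ^ 2) m :=
    (Complex.isPrimitiveRoot_exp_pi_mul_I_div m (by omega)).pow (by omega) rfl
  obtain ⟨ζ', hζ'⟩ : ∃ z, z = ζ⁻¹ := ⟨_, rfl⟩
  have hμ' : IsPrimitiveRoot (ζ' ^ 2) m := by rw [hζ', inv_pow]; exact hμ.inv
  have hζζ' : ζ * ζ' = 1 := hζ' ▸ mul_inv_cancel₀ (Complex.exp_ne_zero _)
  have hζ_sub : ζ - ζ' ≠ 0 := fun h =>
    hμ.ne_one (by omega) (by linear_combination ζ * h + hζζ')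
  have hab' : 2 * M.bilinCoeff a b = -(ζ + ζ') := by rw [hζ', bilinCoeff]; ring
  have hba' : 2 * M.bilinCoeff b a = -(ζ + ζ') := by rw [bilinCoeff_comm, hab']
  set ea : B →₀ ℂ := Finsupp.single a 1
  set eb : B →₀ ℂ := Finsupp.single b 1
  have hσa : M.geomReflection a eb = eb + (ζ + ζ') • ea := by
    rw [geomReflection_single, hab']; module
  have hσb : M.geomReflection b ea = ea + (ζ + ζ') • eb := by
    rw [geomReflection_single, hba']; module
  have hσaa : M.geomReflection a ea = -ea := M.geomReflection_single_self a
  have hσbb : M.geomReflection b eb = -eb := M.geomReflection_single_self b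
  set ρ := M.geomReflection a * M.geomReflection b
  have hρζ : ρ (ea + ζ' • eb) = ζ ^ 2 • (ea + ζ' • eb) := by
    simp only [ρ, Module.End.mul_apply, map_add, map_neg, map_smul, hσa, hσb, hσaa, hσbb]
    linear_combination (norm := module) hζζ' • (ea - ζ • eb)
  have hρζ' : ρ (ea + ζ • eb) = ζ' ^ 2 • (ea + ζ • eb) := by
    simp only [ρ, Module.End.mul_apply, map_add, map_neg, map_smul, hσa, hσb, hσaa, hσbb]
    linear_combination (norm := module) hζζ' • (ea - ζ' • eb)
  set S := ∑ k ∈ range m, ρ ^ k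
  have hSζ : S (ea + ζ' • eb) = 0 := by
    rw [Module.End.geom_sum_apply_of_apply_eq_smul hρζ, hμ.geom_sum_eq_zero (by omega),
      zero_smul]
  have hSζ' : S (ea + ζ • eb) = 0 := by
    rw [Module.End.geom_sum_apply_of_apply_eq_smul hρζ', hμ'.geom_sum_eq_zero (by omega),
      zero_smul]
  have hSb : S eb = 0 := by
    have : (ζ - ζ') • S eb = S (ea + ζ • eb) - S (ea + ζ' • eb) := by
      simp only [map_add, map_smul]; module
    rwa [hSζ, hSζ', sub_zero, smul_eq_zero, or_iff_right hζ_sub] at this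
  refine ⟨?_, hSb⟩
  have : S ea = S (ea + ζ' • eb) - ζ' • S eb := by simp only [map_add, map_smul]; module
  rw [this, hSζ, hSb, smul_zero, sub_zero]

theorem geomReflection_mul_pow {a b : B} (hab : 2 ≤ M a b) :
    (M.geomReflection a * M.geomReflection b) ^ M a b = 1 := by
  obtain ⟨hSa, hSb⟩ := M.geom_sum_geomReflection_mul_single_eq_zero hab
  refine LinearMap.ext fun v => ?_
  -- the product moves each vector only within the span of `single a 1` and `single b 1`,
  -- which the geometric sum kills
  have hmove : (M.geomReflection a * M.geomReflection b) v - v =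
      (-(2 * M.pairing a (M.geomReflection b v))) • Finsupp.single a 1 +
        (-(2 * M.pairing b v)) • Finsupp.single b 1 := by
    rw [Module.End.mul_apply, geomReflection_apply M a, geomReflection_apply M b v]
    module
  have hgeom :=
    LinearMap.congr_fun (geom_sum_mul (M.geomReflection a * M.geomReflection b) (M a b)) v
  rw [Module.End.mul_apply, LinearMap.sub_apply, LinearMap.sub_apply, Module.End.one_apply,
    hmove, map_add, map_smul, map_smul, hSa, hSb, smul_zero, smul_zero, add_zero] at hgeom
  rw [Module.End.one_apply, ← sub_eq_zero, hgeom]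

theorem isLiftable_geomReflection : M.IsLiftable M.geomReflection := by
  intro a b
  rcases Nat.lt_or_ge (M a b) 2 with h | h
  · interval_cases hab : M a b
    · exact pow_zero _
    · obtain rfl : a = b := by_contra fun hne => M.off_diagonal a b hne hab
      rw [pow_one, geomReflection_mul_self]
  · exact M.geomReflection_mul_pow h

end CoxeterMatrix

theorem CoxeterSystem.simple_injective (cs : CoxeterSystem M W) : Function.Injective cs.simple := by
  intro i j hij
  by_contra hne
  have h := congrArg (cs.lift ⟨M.geomReflection, M.isLiftable_geomReflection⟩) hij
  rw [cs.lift_apply_simple, cs.lift_apply_simple] at h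
  have hi := LinearMap.congr_fun h (Finsupp.single i 1)
  rw [M.geomReflection_single_self, M.geomReflection_single] at hi
  have := congrArg (· i) hi
  norm_num [Ne.symm hne] at this

section SignedConj

variable {G : Type*} [Group G] [DecidableEq G]

def signedConj (x : G) : Function.End (G × ZMod 2) :=
  fun p => (x * p.1 * x, p.2 + if p.1 = x then 1 else 0)

theorem signedConj_smul (x t : G) (ε : ZMod 2) :
    signedConj x • (t, ε) = (x * t * x, ε + if t = x then 1 else 0) := rfl

theorem signedConj_mul_pow_smul {x y : G} (hx : x * x = 1) (hy : y * y = 1) (k : ℕ) (t : G)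
    (ε : ZMod 2) :
    (signedConj x * signedConj y) ^ k • (t, ε) =
      ((x * y) ^ k * t * (y * x) ^ k,
        ε + ∑ n ∈ range (2 * k), if t = (y * x) ^ n * y then 1 else 0) := by
  have hx' (z : G) : x * (x * z) = z := by rw [← mul_assoc, hx, one_mul]
  have hy' (z : G) : y * (y * z) = z := by rw [← mul_assoc, hy, one_mul]
  have hconj (t z : G) : x * y * t * (y * x) = z ↔ t = y * x * z * (x * y) := by
    constructor <;> rintro rfl <;> simp [mul_assoc, hx, hy, hx', hy']
  induction k generalizing t ε with
  | zero => simp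
  | succ k ih =>
    have hstep : (signedConj x * signedConj y) • (t, ε) = (x * y * t * (y * x),
        ε + ((if t = (y * x) ^ 0 * y then 1 else 0) + if t = (y * x) ^ 1 * y then 1 else 0)) := by
      have hyty : y * t * y = x ↔ t = (y * x) ^ 1 * y := by
        rw [pow_one]; constructor <;> rintro rfl <;> simp [mul_assoc, hy, hy']
      rw [mul_smul, signedConj_smul, signedConj_smul, if_congr hyty rfl rfl, pow_zero, one_mul]
      ext
      · simp only [mul_assoc]
      · simp only; ring
    have hshift (n : ℕ) :
        x * y * t * (y * x) = (y * x) ^ n * y ↔ t = (y * x) ^ (n + 2) * y := by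
      rw [hconj, pow_succ', pow_succ]
      simp only [mul_assoc]
    rw [pow_succ, mul_smul, hstep, ih, mul_add_one, Finset.sum_range_succ', Finset.sum_range_succ']
    simp only [hshift]
    ext
    · rw [pow_succ (x * y), pow_succ' (y * x) k]
      simp only [mul_assoc]
    · simp only; ring

theorem signedConj_mul_pow_eq_one {x y : G} (hx : x * x = 1) (hy : y * y = 1) {m : ℕ}
    (hm : (x * y) ^ m = 1) : (signedConj x * signedConj y) ^ m = 1 := by
  have hm' : (y * x) ^ m = 1 := by
    have : y * x * (x * y) = 1 := by simp [mul_assoc, ← mul_assoc x, hx, hy]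
    rw [eq_inv_of_mul_eq_one_left this, inv_pow, hm, inv_one]
  funext ⟨t, ε⟩
  change (signedConj x * signedConj y) ^ m • (t, ε) = (t, ε)
  -- `(y x)ⁿ y` has period `m` in `n`, so every element is counted an even number of times
  have hperiod (n : ℕ) : (y * x) ^ (m + n) = (y * x) ^ n := by rw [pow_add, hm', one_mul]
  rw [signedConj_mul_pow_smul hx hy, hm, hm', two_mul, Finset.sum_range_add]
  simp only [hperiod, CharTwo.add_self_eq_zero, add_zero, one_mul, mul_one]

end SignedConj

namespace CoxeterSystem

variable (cs : CoxeterSystem M W)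

open Classical in
noncomputable def signedConjRep : W →* Function.End (W × ZMod 2) :=
  cs.lift ⟨fun i => signedConj (cs.simple i), fun i i' =>
    signedConj_mul_pow_eq_one (cs.simple_mul_simple_self i) (cs.simple_mul_simple_self i')
      (cs.simple_mul_simple_pow i i')⟩

open Classical in
theorem signedConjRep_simple (i : B) :
    cs.signedConjRep (cs.simple i) = signedConj (cs.simple i) :=
  cs.lift_apply_simple _ i

open Classical in
theorem signedConjRep_wordProd_smul (ω : List B) (t : W) (ε : ZMod 2) :
    cs.signedConjRep (cs.wordProd ω) • (t, ε) =
      (cs.wordProd ω * t * (cs.wordProd ω)⁻¹,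
        ε + ((cs.rightInvSeq ω).count t : ZMod 2)) := by
  induction ω generalizing t ε with
  | nil => simp
  | cons i ω ih =>
    have hcount : (cs.wordProd ω)⁻¹ * cs.simple i * cs.wordProd ω = t ↔
        cs.wordProd ω * t * (cs.wordProd ω)⁻¹ = cs.simple i := by
      constructor <;> intro h <;> rw [← h] <;> group
    rw [cs.wordProd_cons, map_mul, mul_smul, ih, signedConjRep_simple, signedConj_smul]
    simp only [rightInvSeq, List.count_cons, beq_iff_eq, hcount, mul_inv_rev, inv_simple]
    ext
    · simp only [mul_assoc]
    · push_cast; ring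

open Classical in
theorem mem_rightInvSeq_iff_signedConjRep {ω : List B} (hω : cs.IsReduced ω) (t : W) :
    t ∈ cs.rightInvSeq ω ↔
      (cs.signedConjRep (cs.wordProd ω) • (t, (0 : ZMod 2))).2 = 1 := by
  rw [signedConjRep_wordProd_smul, zero_add]
  by_cases ht : t ∈ cs.rightInvSeq ω
  · simp [List.count_eq_one_of_mem hω.nodup_rightInvSeq ht, ht]
  · simp [List.count_eq_zero_of_not_mem ht, ht]

variable {cs} in
theorem IsReduced.concat {ω : List B} {j : B} (hω : cs.IsReduced ω)
    (hj : ¬ cs.IsRightDescent (cs.wordProd ω) j) : cs.IsReduced (ω.concat j) := by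
  rw [IsReduced, wordProd_concat, cs.not_isRightDescent_iff.mp hj, hω.eq, List.length_concat]

theorem simple_mem_rightInvSeq_of_isRightDescent {ω : List B} (hω : cs.IsReduced ω) {j : B}
    (hj : cs.IsRightDescent (cs.wordProd ω) j) : cs.simple j ∈ cs.rightInvSeq ω := by
  obtain ⟨τ, hτ, hτω⟩ := cs.exists_isReduced (cs.wordProd ω * cs.simple j)
  have hτj : cs.wordProd (τ.concat j) = cs.wordProd ω := by
    rw [wordProd_concat, ← hτω, simple_mul_simple_cancel_right]
  have hτj_reduced : cs.IsReduced (τ.concat j) :=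
    hτ.concat (by rwa [← hτω, ← isRightDescent_iff_not_isRightDescent_mul])
  rw [cs.mem_rightInvSeq_iff_signedConjRep hω, ← hτj,
    ← cs.mem_rightInvSeq_iff_signedConjRep hτj_reduced, rightInvSeq_concat]
  simp

theorem simple_mem_leftInvSeq_of_isLeftDescent {ω : List B} (hω : cs.IsReduced ω) {i : B}
    (hi : cs.IsLeftDescent (cs.wordProd ω) i) : cs.simple i ∈ cs.leftInvSeq ω := by
  have := cs.simple_mem_rightInvSeq_of_isRightDescent ((cs.isReduced_reverse_iff ω).mpr hω)
    (by rwa [wordProd_reverse, isRightDescent_inv_iff])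
  rwa [rightInvSeq_reverse, List.mem_reverse] at this

theorem simple_mul_eq_mul_simple {v : W} {i j : B} (hi : ¬ cs.IsLeftDescent v i)
    (hj : ¬ cs.IsRightDescent v j) (hij : cs.IsLeftDescent (v * cs.simple j) i) :
    cs.simple i * v = v * cs.simple j := by
  obtain ⟨ω, hω, rfl⟩ := cs.exists_isReduced v
  have hmem := cs.simple_mem_leftInvSeq_of_isLeftDescent (hω.concat hj)
    (by rwa [wordProd_concat])
  rw [leftInvSeq_concat, List.concat_eq_append, List.mem_append, List.mem_singleton] at hmem
  rcases hmem with hmem | hmem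
  · exact absurd ((isLeftInversion_simple_iff_isLeftDescent ..).mp
      (cs.isLeftInversion_of_mem_leftInvSeq hω hmem)) hi
  · rw [hmem]; group

theorem isRightDescent_simple_mul_iff {v : W} {i j : B} (hi : ¬ cs.IsLeftDescent v i) :
    cs.IsRightDescent (cs.simple i * v) j ↔
      cs.IsRightDescent v j ∨ cs.simple i * v = v * cs.simple j := by
  have hiv := cs.not_isLeftDescent_iff.mp hi
  constructor
  · intro h
    by_cases hj : cs.IsRightDescent v j
    · exact Or.inl hj
    · refine Or.inr (cs.simple_mul_eq_mul_simple hi hj ?_)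
      rw [isRightDescent_iff] at h
      rw [IsLeftDescent, ← mul_assoc, cs.not_isRightDescent_iff.mp hj]
      omega
  · rintro (h | h)
    · have := cs.length_simple_mul (v * cs.simple j) i
      rw [isRightDescent_iff] at h
      rw [IsRightDescent, mul_assoc]
      omega
    · rw [IsRightDescent, h, simple_mul_simple_cancel_right, ← h]
      omega

theorem finite_setOf_isRightDescent (w : W) : {j | cs.IsRightDescent w j}.Finite := by
  obtain ⟨ω, hω, rfl⟩ := cs.exists_isReduced w
  exact ((cs.rightInvSeq ω).finite_toSet.preimage cs.simple_injective.injOn).subset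
    fun _ hj => cs.simple_mem_rightInvSeq_of_isRightDescent hω hj

end CoxeterSystem

theorem rightDescent_card_of_left_cover_general
    (cs : CoxeterSystem M W) (v w : W) (i : B)
    (hw : w = cs.simple i * v) (hl : cs.length w = cs.length v + 1) :
    Set.ncard {j : B | cs.IsRightDescent w j} = Set.ncard {j : B | cs.IsRightDescent v j} ∨
    Set.ncard {j : B | cs.IsRightDescent w j} = Set.ncard {j : B | cs.IsRightDescent v j} + 1 := by
  subst hw
  have hi : ¬ cs.IsLeftDescent v i := cs.not_isLeftDescent_iff.mpr hl
  have hsplit : {j | cs.IsRightDescent (cs.simple i * v) j} =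
      {j | cs.IsRightDescent v j} ∪ {j | cs.simple i * v = v * cs.simple j} :=
    Set.ext fun _ => cs.isRightDescent_simple_mul_iff hi
  have hdisj : Disjoint {j | cs.IsRightDescent v j} {j | cs.simple i * v = v * cs.simple j} := by
    refine Set.disjoint_left.mpr fun j hj hj' => ?_
    rw [Set.mem_ofPred_eq, IsRightDescent, ← hj'.out, hl] at hj
    omega
  have hnew : {j | cs.simple i * v = v * cs.simple j}.Subsingleton :=
    fun j hj j' hj' => cs.simple_injective (mul_left_cancel (hj.symm.trans hj'))
  rw [hsplit, Set.ncard_union_eq hdisj (cs.finite_setOf_isRightDescent v) hnew.finite]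
  rcases hnew.eq_empty_or_singleton with h | ⟨j, h⟩ <;> simp [h]

/-- Along a left weak order cover, the right descent number increases by at most one. -/
theorem rightDescent_card_of_left_cover [Finite B]
    (cs : CoxeterSystem M W) (v w : W) (i : B)
    (hw : w = cs.simple i * v) (hl : cs.length w = cs.length v + 1) :
    Set.ncard {j : B | cs.IsRightDescent w j} = Set.ncard {j : B | cs.IsRightDescent v j} ∨
    Set.ncard {j : B | cs.IsRightDescent w j} = Set.ncard {j : B | cs.IsRightDescent v j} + 1 :=
  rightDescent_card_of_left_cover_general cs v w i hw hl
end

section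
/- Let W be a finite Coxeter group and X a parabolic double coset whose maximal element is w, such that X is covered in the reverse-containment order on parabolic double cosets by the singleton {w}. Then X has exactly two elements, i.e., X = {w, v} where v ⋖ w, and moreover X equals {w, sw} for some s ∈ D_L(w) or {w, ws} for some s ∈ D_R(w). -/
/-!
Write `X = W_I x W_J`. Since `w ∈ X`, also `X = W_I w W_J`. If `I` and `J` are both empty,
then `X = {w}`. Otherwise, say `s = s_i` with `i ∈ I`; then `W_{i} w = {w, s w}` is a parabolic
double coset with `{w} ⊊ W_{i} w ⊆ X`, so the covering hypothesis forces `X = {w, s w}`, and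
maximality of `w` gives `ℓ(s w) < ℓ(w)`, i.e. `s` is a left descent. For `j ∈ J` the argument
is the mirror image.
-/

open CoxeterSystem

variable {B W : Type*} [Group W] {M : CoxeterMatrix B}

section

variable (cs : CoxeterSystem M W)

lemma parabolic_empty : parabolic cs ∅ = ⊥ := by
  rw [parabolic, Set.image_empty, Subgroup.closure_empty]

lemma mem_parabolic_singleton {i : B} {u : W} :
    u ∈ parabolic cs {i} ↔ u = 1 ∨ u = cs.simple i := by
  rw [parabolic, Set.image_singleton, ← Subgroup.zpowers_eq_closure, Subgroup.mem_zpowers_iff]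
  constructor
  · rintro ⟨k, rfl⟩
    rw [zpow_eq_zpow_emod' k (cs.simple_sq i)]
    rcases Int.emod_two_eq_zero_or_one k with h | h <;> simp [h]
  · rintro (rfl | rfl)
    exacts [⟨0, zpow_zero _⟩, ⟨1, zpow_one _⟩]

lemma parabolic_mono {I I' : Set B} (h : I ⊆ I') : parabolic cs I ≤ parabolic cs I' :=
  Subgroup.closure_mono (Set.image_mono h)

lemma doubleCoset_mono {I I' J J' : Set B} (hI : I ⊆ I') (hJ : J ⊆ J') (x : W) :
    doubleCoset cs I J x ⊆ doubleCoset cs I' J' x := by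
  rintro _ ⟨u, hu, v, hv, rfl⟩
  exact ⟨u, parabolic_mono cs hI hu, v, parabolic_mono cs hJ hv, rfl⟩

lemma doubleCoset_eq_of_mem {I J : Set B} {x w : W} (h : w ∈ doubleCoset cs I J x) :
    doubleCoset cs I J x = doubleCoset cs I J w := by
  obtain ⟨a, ha, b, hb, rfl⟩ := h
  ext z
  constructor
  · rintro ⟨u, hu, v, hv, rfl⟩
    exact ⟨u * a⁻¹, mul_mem hu (inv_mem ha), b⁻¹ * v, mul_mem (inv_mem hb) hv, by group⟩
  · rintro ⟨u, hu, v, hv, rfl⟩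
    exact ⟨u * a, mul_mem hu ha, b * v, mul_mem hb hv, by group⟩

lemma doubleCoset_empty_empty (w : W) : doubleCoset cs ∅ ∅ w = {w} := by
  ext z
  simp [doubleCoset, parabolic_empty]

lemma doubleCoset_singleton_empty (i : B) (w : W) :
    doubleCoset cs {i} ∅ w = {w, cs.simple i * w} := by
  ext z
  simp [doubleCoset, parabolic_empty, mem_parabolic_singleton, eq_comm]

lemma doubleCoset_empty_singleton (i : B) (w : W) :
    doubleCoset cs ∅ {i} w = {w, w * cs.simple i} := by
  ext z
  simp [doubleCoset, parabolic_empty, mem_parabolic_singleton, eq_comm]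

end

namespace CoxeterSystem

variable (cs : CoxeterSystem M W)

theorem simple_ne_one (i : B) : cs.simple i ≠ 1 := fun h => by
  simpa [h] using cs.length_simple i

theorem isLeftDescent_of_length_simple_mul_le {w : W} {i : B}
    (h : cs.length (cs.simple i * w) ≤ cs.length w) : cs.IsLeftDescent w i := by
  by_contra hn
  rw [not_isLeftDescent_iff] at hn
  omega

theorem isRightDescent_of_length_mul_simple_le {w : W} {i : B}
    (h : cs.length (w * cs.simple i) ≤ cs.length w) : cs.IsRightDescent w i := by
  by_contra hn
  rw [not_isRightDescent_iff] at hn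
  omega

end CoxeterSystem

lemma eq_pair_of_forall_eq_singleton_or_eq (cs : CoxeterSystem M W) {X : Set W} {w v : W}
    {I J : Set B}
    (hcov : ∀ Y : Set W, (∃ I J : Set B, ∃ x : W, Y = doubleCoset cs I J x) →
      {w} ⊆ Y → Y ⊆ X → Y = {w} ∨ Y = X)
    (hY : doubleCoset cs I J w = {w, v}) (hv : v ≠ w) (hYX : doubleCoset cs I J w ⊆ X) :
    X = {w, v} := by
  rcases hcov _ ⟨I, J, w, rfl⟩ (by simp [hY]) hYX with h | h
  · exact absurd (h ▸ hY ▸ Set.mem_insert_of_mem w rfl : v ∈ ({w} : Set W)) hv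
  · rw [← h, hY]

theorem coset_covered_by_singleton_general
    (cs : CoxeterSystem M W) (X : Set W) (w : W)
    (hX : ∃ I J : Set B, ∃ x : W, X = doubleCoset cs I J x)
    (hwX : w ∈ X) (hmax : ∀ y ∈ X, cs.length y ≤ cs.length w)
    (hne : X ≠ {w})
    (hcov : ∀ Y : Set W, (∃ I J : Set B, ∃ x : W, Y = doubleCoset cs I J x) →
      {w} ⊆ Y → Y ⊆ X → Y = {w} ∨ Y = X) :
    (∃ v : W, X = {w, v} ∧ v ≠ w ∧ cs.length v + 1 = cs.length w) ∧
    ((∃ i : B, cs.IsLeftDescent w i ∧ X = {w, cs.simple i * w}) ∨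
     (∃ i : B, cs.IsRightDescent w i ∧ X = {w, w * cs.simple i})) := by
  obtain ⟨I, J, x, rfl⟩ := hX
  rw [doubleCoset_eq_of_mem cs hwX] at hmax hne hcov ⊢
  have hIJ : I.Nonempty ∨ J.Nonempty := by
    by_contra! h
    exact hne (by rw [h.1, h.2, doubleCoset_empty_empty])
  rcases hIJ with ⟨i, hi⟩ | ⟨j, hj⟩
  · have hsw : cs.simple i * w ≠ w := mul_ne_right.mpr (cs.simple_ne_one i)
    have hXpair := eq_pair_of_forall_eq_singleton_or_eq cs hcov (doubleCoset_singleton_empty cs i w)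
      hsw (doubleCoset_mono cs (Set.singleton_subset_iff.mpr hi) (Set.empty_subset J) w)
    have hd := cs.isLeftDescent_of_length_simple_mul_le (hmax (cs.simple i * w) (by simp [hXpair]))
    exact ⟨⟨_, hXpair, hsw, cs.isLeftDescent_iff.mp hd⟩, Or.inl ⟨i, hd, hXpair⟩⟩
  · have hws : w * cs.simple j ≠ w := mul_ne_left.mpr (cs.simple_ne_one j)
    have hXpair := eq_pair_of_forall_eq_singleton_or_eq cs hcov (doubleCoset_empty_singleton cs j w)
      hws (doubleCoset_mono cs (Set.empty_subset I) (Set.singleton_subset_iff.mpr hj) w)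
    have hd := cs.isRightDescent_of_length_mul_simple_le (hmax (w * cs.simple j) (by simp [hXpair]))
    exact ⟨⟨_, hXpair, hws, cs.isRightDescent_iff.mp hd⟩, Or.inr ⟨j, hd, hXpair⟩⟩

/-- A parabolic double coset covered by its maximal singleton in the reverse-containment order
has exactly two elements, of the form `{w, sw}` or `{w, ws}` for a descent `s` of `w`. -/
theorem coset_covered_by_singleton [Finite W]
    (cs : CoxeterSystem M W) (X : Set W) (w : W)
    (hX : ∃ I J : Set B, ∃ x : W, X = doubleCoset cs I J x)
    (hwX : w ∈ X) (hmax : ∀ y ∈ X, cs.length y ≤ cs.length w)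
    (hne : X ≠ {w})
    (hcov : ∀ Y : Set W, (∃ I J : Set B, ∃ x : W, Y = doubleCoset cs I J x) →
      {w} ⊆ Y → Y ⊆ X → Y = {w} ∨ Y = X) :
    (∃ v : W, X = {w, v} ∧ v ≠ w ∧ cs.length v + 1 = cs.length w) ∧
    ((∃ i : B, cs.IsLeftDescent w i ∧ X = {w, cs.simple i * w}) ∨
     (∃ i : B, cs.IsRightDescent w i ∧ X = {w, w * cs.simple i})) :=
  coset_covered_by_singleton_general cs X w hX hwX hmax hne hcov
end

section
/- Let W be a finite Coxeter group, w ∈ W, and r ∈ D_L(w). For every v ∈ W, the degree of v in the Bruhat graph on the lower interval [e, w] equals the degree of rv, i.e., deg_w(v) = deg_w(rv), where elements not in [e,w] have degree 0. -/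
/-!
Left multiplication by `s = s_i` is a bijection of `W` that conjugates the set of reflections, so
it maps the neighbours `t v` of `v` onto the neighbours `(s t s) (s v)` of `s v`; it remains to see
that it preserves `[e, w]` when `s w < w` (Deodhar's property Z). For this, `v ↦ max(v, s v)` is
monotone along every Bruhat edge `u → t u`. The only nontrivial case, `s u > u`, `s t u < t u`,
`t ≠ s`, holds because `t ↦ s t s` maps the left inversions `t ≠ s` of any `x` to left inversions
of `s x`, which is read off the reflection cocycle of the standard action of `W` on `T × {±1}`.
Then `s v ≤ max(v, s v) ≤ max(w, s w) = w`.
-/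

open CoxeterSystem

variable {B W : Type*} [Group W] {M : CoxeterMatrix B}

open scoped Classical in
/-- Degree of `v` in the Bruhat graph on the lower interval `[e, w]` (0 outside). -/
noncomputable def degLower (cs : CoxeterSystem M W) (w v : W) : ℕ :=
  if bruhatLE cs v w then
    Set.ncard {y : W | bruhatLE cs y w ∧ (bruhatEdge cs v y ∨ bruhatEdge cs y v)}
  else 0

namespace CoxeterSystem

variable (cs : CoxeterSystem M W)

local prefix:100 "s" => cs.simple
local prefix:100 "π" => cs.wordProd
local prefix:100 "ℓ" => cs.length

section InversionSign

open scoped Classical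

noncomputable def reflectionRepSimple (i : B) : Equiv.Perm (W × ℤˣ) :=
  Function.Involutive.toPerm
    (fun p => (s i * p.1 * s i, (if p.1 = s i then -1 else 1) * p.2)) <| by
    rintro ⟨t, e⟩
    by_cases h : t = s i <;> simp [h, mul_assoc, mul_eq_one_iff_eq_inv]

theorem reflectionRepSimple_apply (i : B) (t : W) (e : ℤˣ) :
    cs.reflectionRepSimple i (t, e) = (s i * t * s i, (if t = s i then -1 else 1) * e) := rfl

theorem reflectionRepSimple_mul_pow_apply (i j : B) (k : ℕ) (t : W) (e : ℤˣ) :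
    ((cs.reflectionRepSimple i * cs.reflectionRepSimple j) ^ k) (t, e) =
      ((s i * s j) ^ k * t * ((s i * s j) ^ k)⁻¹,
        (∏ l ∈ Finset.range (2 * k), if t = s j * (s i * s j) ^ l then -1 else 1) * e) := by
  set x := s i * s j
  have hconj (u : W) : s i * (s j * u * s j) * s i = x * u * x⁻¹ := by
    simp [x, mul_assoc]
  have hsimple (u : W) : s j * u * s j = s i ↔ u = s j * x ^ 1 := by
    constructor
    · rintro h; simp [x, ← h, mul_assoc]
    · rintro rfl; simp [x, mul_assoc]
  have hshift (u : W) (l : ℕ) : x * u * x⁻¹ = s j * x ^ l ↔ u = s j * x ^ (l + 2) := by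
    have : x⁻¹ * (s j * x ^ l) * x = s j * x ^ (l + 2) := by
      rw [pow_succ, pow_succ', ← mul_assoc, ← mul_assoc, ← mul_assoc,
        show x⁻¹ * s j = s j * x by simp [x, mul_assoc]]
      simp only [x, mul_assoc]
    rw [← this]
    constructor
    · rintro h; rw [← h]; group
    · rintro rfl; group
  induction k generalizing t e with
  | zero => simp
  | succ k ih =>
    rw [pow_succ, Equiv.Perm.mul_apply, Equiv.Perm.mul_apply, reflectionRepSimple_apply,
      reflectionRepSimple_apply, hconj, ih, hsimple]
    simp only [hshift, Prod.mk.injEq]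
    constructor
    · simp only [pow_succ, mul_inv_rev, mul_assoc]
    · rw [show 2 * (k + 1) = 2 * k + 1 + 1 by ring, Finset.prod_range_succ',
        Finset.prod_range_succ']
      simp only [pow_zero, mul_one, mul_assoc]

theorem reflectionRepSimple_isLiftable : M.IsLiftable cs.reflectionRepSimple := by
  intro i j
  ext1 ⟨t, e⟩
  rw [reflectionRepSimple_mul_pow_apply, cs.simple_mul_simple_pow, Equiv.Perm.one_apply]
  have hperiodic (l : ℕ) : s j * (s i * s j) ^ (M i j + l) = s j * (s i * s j) ^ l := by
    rw [pow_add, cs.simple_mul_simple_pow, one_mul]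
  simp [two_mul, Finset.prod_range_add, hperiodic, Int.units_mul_self]

noncomputable def reflectionRep : W →* Equiv.Perm (W × ℤˣ) :=
  cs.lift ⟨cs.reflectionRepSimple, cs.reflectionRepSimple_isLiftable⟩

noncomputable def inversionSign (w t : W) : ℤˣ := (cs.reflectionRep w (t, 1)).2

theorem reflectionRep_apply (w t : W) (e : ℤˣ) :
    cs.reflectionRep w (t, e) = (w * t * w⁻¹, cs.inversionSign w t * e) := by
  induction w using cs.simple_induction_left generalizing t e with
  | one => simp [inversionSign]
  | mul_simple_left w i ih =>
    have h (e : ℤˣ) : cs.reflectionRep (s i * w) (t, e) =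
        ((s i * w) * t * (s i * w)⁻¹,
          (if w * t * w⁻¹ = s i then -1 else 1) * cs.inversionSign w t * e) := by
      rw [map_mul, Equiv.Perm.mul_apply, ih, reflectionRep, lift_apply_simple,
        reflectionRepSimple_apply]
      simp [mul_assoc]
    rw [h, show cs.inversionSign (s i * w) t = _ from (congrArg Prod.snd (h 1)).trans (mul_one _)]

theorem inversionSign_mul (u v t : W) :
    cs.inversionSign (u * v) t = cs.inversionSign u (v * t * v⁻¹) * cs.inversionSign v t := by
  rw [inversionSign, map_mul, Equiv.Perm.mul_apply, cs.reflectionRep_apply v, mul_one,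
    reflectionRep_apply]

theorem inversionSign_one (t : W) : cs.inversionSign 1 t = 1 := by
  simp [inversionSign]

theorem inversionSign_simple (i : B) (t : W) :
    cs.inversionSign (s i) t = if t = s i then -1 else 1 := by
  simp [inversionSign, reflectionRep, lift_apply_simple, reflectionRepSimple_apply]

theorem inversionSign_self {t : W} (ht : cs.IsReflection t) : cs.inversionSign t t = -1 := by
  obtain ⟨q, j, rfl⟩ := ht
  have hconj : q⁻¹ * (q * s j * q⁻¹) * q⁻¹⁻¹ = s j := by group
  have h1 := cs.inversionSign_mul q q⁻¹ (q * s j * q⁻¹)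
  have h2 := cs.inversionSign_mul (q * s j) q⁻¹ (q * s j * q⁻¹)
  have h3 := cs.inversionSign_mul q (s j) (s j)
  rw [hconj, mul_inv_cancel, inversionSign_one] at h1
  rw [hconj] at h2
  rw [inversionSign_simple, if_pos rfl, inv_simple, simple_mul_simple_cancel_right] at h3
  rw [h2, h3, mul_right_comm, ← h1, one_mul]

theorem mem_rightInvSeq_of_inversionSign_eq_neg_one {ω : List B} {t : W}
    (h : cs.inversionSign (π ω) t = -1) : t ∈ cs.rightInvSeq ω := by
  induction ω with
  | nil => simp [inversionSign_one] at h
  | cons i ω ih =>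
    rw [wordProd_cons, inversionSign_mul, inversionSign_simple] at h
    rw [rightInvSeq, List.mem_cons]
    rcases Int.units_eq_one_or (cs.inversionSign (π ω) t) with h1 | h1
    · rw [h1, mul_one, ite_eq_left_iff] at h
      have hc : π ω * t * (π ω)⁻¹ = s i := not_not.mp fun hc => absurd (h hc) (by decide)
      left
      rw [← hc]
      group
    · exact Or.inr (ih h1)

theorem inversionSign_eq_neg_one_iff {w t : W} (ht : cs.IsReflection t) :
    cs.inversionSign w t = -1 ↔ cs.IsRightInversion w t := by
  have of_eq {w : W} (h : cs.inversionSign w t = -1) : cs.IsRightInversion w t := by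
    obtain ⟨ω, hω, rfl⟩ := cs.exists_isReduced w
    exact cs.isRightInversion_of_mem_rightInvSeq hω
      (cs.mem_rightInvSeq_of_inversionSign_eq_neg_one h)
  refine ⟨of_eq, fun ⟨_, hlt⟩ => ?_⟩
  refine (Int.units_eq_one_or _).resolve_left fun h1 => ?_
  have h := (of_eq (w := w * t) (by
    rw [inversionSign_mul, mul_inv_cancel_right, h1, inversionSign_self cs ht, one_mul])).2
  rw [mul_assoc, ht.mul_self, mul_one] at h
  omega

theorem isRightInversion_mul_simple_iff {w t : W} {i : B} (hti : t ≠ s i) :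
    cs.IsRightInversion (w * s i) (s i * t * s i) ↔ cs.IsRightInversion w t := by
  have hconj : cs.IsReflection (s i * t * s i) ↔ cs.IsReflection t := by
    simpa [inv_simple] using cs.isReflection_conj_iff (s i) t
  by_cases ht : cs.IsReflection t
  · rw [← inversionSign_eq_neg_one_iff cs (hconj.2 ht), ← inversionSign_eq_neg_one_iff cs ht,
      inversionSign_mul, inversionSign_simple, if_neg]
    · simp [mul_assoc]
    · simpa [mul_assoc, mul_eq_one_iff_eq_inv] using hti
  · simp [IsRightInversion, ht, hconj]

theorem isLeftInversion_simple_mul_iff {w t : W} {i : B} (hti : t ≠ s i) :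
    cs.IsLeftInversion (s i * w) (s i * t * s i) ↔ cs.IsLeftInversion w t := by
  rw [← isRightInversion_inv_iff, ← isRightInversion_inv_iff, mul_inv_rev, inv_simple,
    isRightInversion_mul_simple_iff cs hti]

end InversionSign

theorem bruhatEdge_simple_mul_of_isLeftDescent {w : W} {i : B} (h : cs.IsLeftDescent w i) :
    bruhatEdge cs (s i * w) w :=
  ⟨s i, cs.isReflection_simple i, (cs.simple_mul_simple_cancel_left i).symm, h⟩

theorem bruhatEdge_simple_mul_of_not_isLeftDescent {w : W} {i : B} (h : ¬cs.IsLeftDescent w i) :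
    bruhatEdge cs w (s i * w) :=
  ⟨s i, cs.isReflection_simple i, rfl, by rw [cs.not_isLeftDescent_iff.mp h]; omega⟩

open scoped Classical in
noncomputable def maxSimpleMul (i : B) (w : W) : W :=
  if cs.IsLeftDescent w i then w else s i * w

theorem maxSimpleMul_of_isLeftDescent {w : W} {i : B} (h : cs.IsLeftDescent w i) :
    cs.maxSimpleMul i w = w := by
  simp [maxSimpleMul, h]

theorem maxSimpleMul_of_not_isLeftDescent {w : W} {i : B} (h : ¬cs.IsLeftDescent w i) :
    cs.maxSimpleMul i w = s i * w := by
  simp [maxSimpleMul, h]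

theorem bruhatLE_maxSimpleMul_of_bruhatEdge (i : B) {u w : W} (h : bruhatEdge cs u w) :
    bruhatLE cs (cs.maxSimpleMul i u) (cs.maxSimpleMul i w) := by
  obtain ⟨t, ht, rfl, hlt⟩ := h
  have hconj : s i * (t * u) = (s i * t * s i) * (s i * u) := by simp [mul_assoc]
  have conj_edge (h : ℓ (s i * u) < ℓ (s i * (t * u))) :
      bruhatEdge cs (s i * u) (s i * (t * u)) :=
    ⟨s i * t * s i, by simpa [inv_simple] using ht.conj (s i), hconj, h⟩
  by_cases hu : cs.IsLeftDescent u i <;> by_cases hw : cs.IsLeftDescent (t * u) i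
  · rw [maxSimpleMul_of_isLeftDescent cs hu, maxSimpleMul_of_isLeftDescent cs hw]
    exact .single ⟨t, ht, rfl, hlt⟩
  · rw [maxSimpleMul_of_isLeftDescent cs hu, maxSimpleMul_of_not_isLeftDescent cs hw]
    exact .tail (.single ⟨t, ht, rfl, hlt⟩) (bruhatEdge_simple_mul_of_not_isLeftDescent cs hw)
  · rw [maxSimpleMul_of_not_isLeftDescent cs hu, maxSimpleMul_of_isLeftDescent cs hw]
    by_cases hti : t = s i
    · subst hti
      exact .refl
    have hinv : cs.IsLeftInversion (t * u) t :=
      ⟨ht, by rwa [← mul_assoc, ht.mul_self, one_mul]⟩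
    have hlt' := ((cs.isLeftInversion_simple_mul_iff hti).2 hinv).2
    have hsu : s i * t * s i * (s i * (t * u)) = s i * u := by
      simp only [mul_assoc, simple_mul_simple_cancel_left]
      rw [← mul_assoc t, ht.mul_self, one_mul]
    rw [hsu] at hlt'
    exact .tail (.single (conj_edge hlt')) (bruhatEdge_simple_mul_of_isLeftDescent cs hw)
  · rw [maxSimpleMul_of_not_isLeftDescent cs hu, maxSimpleMul_of_not_isLeftDescent cs hw]
    exact .single (conj_edge (by
      rw [cs.not_isLeftDescent_iff.mp hu, cs.not_isLeftDescent_iff.mp hw]; omega))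

theorem bruhatLE_maxSimpleMul (i : B) {v w : W} (h : bruhatLE cs v w) :
    bruhatLE cs (cs.maxSimpleMul i v) (cs.maxSimpleMul i w) :=
  Relation.ReflTransGen.lift' (cs.maxSimpleMul i)
    (fun _ _ => cs.bruhatLE_maxSimpleMul_of_bruhatEdge i) _ _ h

theorem bruhatLE_simple_mul_maxSimpleMul (i : B) (v : W) :
    bruhatLE cs (s i * v) (cs.maxSimpleMul i v) := by
  by_cases hv : cs.IsLeftDescent v i
  · rw [maxSimpleMul_of_isLeftDescent cs hv]
    exact .single (bruhatEdge_simple_mul_of_isLeftDescent cs hv)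
  · rw [maxSimpleMul_of_not_isLeftDescent cs hv]
    exact .refl

theorem bruhatLE_simple_mul_of_isLeftDescent {v w : W} {i : B} (hw : cs.IsLeftDescent w i)
    (hv : bruhatLE cs v w) : bruhatLE cs (s i * v) w := by
  have h := (cs.bruhatLE_simple_mul_maxSimpleMul i v).trans (cs.bruhatLE_maxSimpleMul i hv)
  rwa [maxSimpleMul_of_isLeftDescent cs hw] at h

theorem bruhatLE_simple_mul_iff_of_isLeftDescent {v w : W} {i : B} (hw : cs.IsLeftDescent w i) :
    bruhatLE cs (s i * v) w ↔ bruhatLE cs v w :=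
  ⟨fun h => by simpa using cs.bruhatLE_simple_mul_of_isLeftDescent hw h,
    cs.bruhatLE_simple_mul_of_isLeftDescent hw⟩

theorem bruhatEdge_or_bruhatEdge_iff {v y : W} :
    (bruhatEdge cs v y ∨ bruhatEdge cs y v) ↔ ∃ t, cs.IsReflection t ∧ y = t * v := by
  constructor
  · rintro (⟨t, ht, rfl, _⟩ | ⟨t, ht, rfl, _⟩)
    · exact ⟨t, ht, rfl⟩
    · exact ⟨t, ht, by rw [← mul_assoc, ht.mul_self, one_mul]⟩
  · rintro ⟨t, ht, rfl⟩
    rcases lt_or_gt_of_ne (ht.length_mul_right_ne v) with h | h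
    · exact .inr ⟨t, ht, by rw [← mul_assoc, ht.mul_self, one_mul], h⟩
    · exact .inl ⟨t, ht, rfl, h⟩

theorem bruhatEdge_or_bruhatEdge_simple_mul_iff (i : B) {v y : W} :
    (bruhatEdge cs (s i * v) (s i * y) ∨ bruhatEdge cs (s i * y) (s i * v)) ↔
      (bruhatEdge cs v y ∨ bruhatEdge cs y v) := by
  have hconj {t : W} (ht : cs.IsReflection t) : cs.IsReflection (s i * t * s i) := by
    simpa [inv_simple] using ht.conj (s i)
  rw [bruhatEdge_or_bruhatEdge_iff, bruhatEdge_or_bruhatEdge_iff]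
  constructor
  · rintro ⟨t, ht, h⟩
    refine ⟨s i * t * s i, hconj ht, ?_⟩
    rw [← cs.simple_mul_simple_cancel_left i (w := y), h]
    simp [mul_assoc]
  · rintro ⟨t, ht, rfl⟩
    exact ⟨s i * t * s i, hconj ht, by simp [mul_assoc]⟩

end CoxeterSystem

theorem degLower_left_descent_invariant_general
    (cs : CoxeterSystem M W) (w : W) (i : B) (hi : cs.IsLeftDescent w i) :
    ∀ v : W, degLower cs w v = degLower cs w (cs.simple i * v) := by
  intro v
  have hinvol : Function.Involutive (cs.simple i * ·) :=
    fun _ => cs.simple_mul_simple_cancel_left i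
  have hneighbours : {y | bruhatLE cs y w ∧
        (bruhatEdge cs (cs.simple i * v) y ∨ bruhatEdge cs y (cs.simple i * v))} =
      (cs.simple i * ·) '' {y | bruhatLE cs y w ∧ (bruhatEdge cs v y ∨ bruhatEdge cs y v)} := by
    rw [hinvol.image_eq_preimage_symm]
    ext y
    rw [Set.mem_preimage, Set.mem_ofPred_eq, Set.mem_ofPred_eq,
      cs.bruhatLE_simple_mul_iff_of_isLeftDescent hi,
      ← cs.bruhatEdge_or_bruhatEdge_simple_mul_iff i, cs.simple_mul_simple_cancel_left]
  rw [degLower, degLower, cs.bruhatLE_simple_mul_iff_of_isLeftDescent hi, hneighbours,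
    Set.ncard_image_of_injective _ (mul_right_injective _)]

/-- Invariance of degree on lower Bruhat intervals under left descents. -/
theorem degLower_left_descent_invariant [Finite W]
    (cs : CoxeterSystem M W) (w : W) (i : B) (hi : cs.IsLeftDescent w i) :
    ∀ v : W, degLower cs w v = degLower cs w (cs.simple i * v) :=
  degLower_left_descent_invariant_general cs w i hi
end
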